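/- arXiv:2307.16677 — 2 statements merged into one kernel-verified Lean document; each statement's English description precedes it below -/
import Mathlib

section
/- Let A be a d×d real matrix that is positively stable. Then exp(-tA) converges to the zero matrix as t → ∞. -/
open Matrix NormedSpace

attribute [local instance] Matrix.linftyOpNormedRing Matrix.linftyOpNormedAlgebra

/-!
On the generalized eigenspace of `C = -A` for an eigenvalue `μ`, the matrix `C - μ` is nilpotent,
so `exp (t C) = e^{t μ} exp (t (C - μ))` acts there as `e^{t μ}` times a polynomial in `t`;
`Re μ < 0` makes every such vector decay, and the generalized eigenspaces span `ℂⁿ`.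
-/

open Filter Topology Finset
open scoped Nat

theorem Complex.tendsto_exp_ofReal_mul_mul_pow_atTop_nhds_zero {μ : ℂ} (hμ : μ.re < 0)
    (m : ℕ) :
    Tendsto (fun t : ℝ => Complex.exp (t * μ) * (t : ℂ) ^ m) atTop (𝓝 0) := by
  rw [tendsto_zero_iff_norm_tendsto_zero]
  refine (tendsto_rpow_mul_exp_neg_mul_atTop_nhds_zero m (-μ.re) (neg_pos.2 hμ)).congr' ?_
  filter_upwards [eventually_ge_atTop 0] with t ht
  rw [norm_mul, Complex.norm_exp, norm_pow, Complex.norm_real, Real.norm_of_nonneg ht,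
    Real.rpow_natCast, mul_comm]
  simp [Complex.mul_re, mul_comm]

namespace Matrix

variable {n R 𝕂 : Type*} [Fintype n] [DecidableEq n]

theorem pow_mulVec_eq_zero_of_le [Semiring R] {N : Matrix n n R} {v : n → R} {k m : ℕ}
    (hv : N ^ k *ᵥ v = 0) (hkm : k ≤ m) : N ^ m *ᵥ v = 0 := by
  rw [← Nat.sub_add_cancel hkm, pow_add, ← mulVec_mulVec, hv, mulVec_zero]

theorem exp_mulVec_eq_sum_of_pow_mulVec_eq_zero [RCLike 𝕂] {N : Matrix n n 𝕂} {v : n → 𝕂}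
    {k : ℕ} (hv : N ^ k *ᵥ v = 0) :
    exp N *ᵥ v = ∑ m ∈ range k, (m !⁻¹ : 𝕂) • (N ^ m *ᵥ v) := by
  have hsum : HasSum (fun m : ℕ => (m !⁻¹ : 𝕂) • (N ^ m *ᵥ v)) (exp N *ᵥ v) := by
    have := (exp_series_hasSum_exp' (𝕂 := 𝕂) N).map (mulVec.addMonoidHomLeft v)
        (continuous_id.matrix_mulVec continuous_const)
    -- `rfl` identifies the topologies of the two `exp`s: the product one and the normed one
    convert this using 2 with m
    · exact (smul_mulVec _ _ _).symm
    · rfl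
  refine hsum.unique (hasSum_sum_of_ne_finset_zero fun m hm => ?_)
  rw [pow_mulVec_eq_zero_of_le hv (by simpa using hm), smul_zero]

theorem exp_algebraMap [RCLike 𝕂] (z : 𝕂) :
    exp (algebraMap 𝕂 (Matrix n n 𝕂) z) = algebraMap 𝕂 (Matrix n n 𝕂) (exp z) :=
  (algebraMap_exp_comm z).symm

theorem mem_spectrum_of_mem_maxGenEigenspace [Field R] {M : Matrix n n R} {μ : R} {w : n → R}
    (hw : w ∈ Module.End.maxGenEigenspace (toLinAlgEquiv' M) μ) (hw0 : w ≠ 0) :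
    μ ∈ spectrum R M := by
  rw [← AlgEquiv.spectrum_eq toLinAlgEquiv' M]
  exact Module.End.HasEigenvalue.mem_spectrum <|
    Module.End.HasUnifEigenvalue.lt zero_lt_one ((Submodule.ne_bot_iff _).2 ⟨w, hw, hw0⟩)

theorem map_ofReal_exp (M : Matrix n n ℝ) :
    (exp M).map Complex.ofReal = exp (M.map Complex.ofReal) :=
  map_exp (Complex.ofRealHom.mapMatrix : Matrix n n ℝ →+* Matrix n n ℂ)
    (continuous_id.matrix_map Complex.continuous_ofReal) M

variable {C : Matrix n n ℂ} {μ : ℂ} {v : n → ℂ} {k : ℕ}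

theorem exp_smul_mulVec_eq_of_pow_sub_mulVec_eq_zero (hv : (C - μ • 1) ^ k *ᵥ v = 0)
    (z : ℂ) :
    exp (z • C) *ᵥ v =
      Complex.exp (z * μ) • ∑ m ∈ range k, (z ^ m * (m ! : ℂ)⁻¹) • ((C - μ • 1) ^ m *ᵥ v) := by
  have hsplit : z • C = algebraMap ℂ _ (z * μ) + z • (C - μ • 1) := by
    rw [Algebra.algebraMap_eq_smul_one]; module
  have hzv : (z • (C - μ • 1)) ^ k *ᵥ v = 0 := by rw [smul_pow, smul_mulVec, hv, smul_zero]
  rw [hsplit, Matrix.exp_add_of_commute _ _ (Algebra.commute_algebraMap_left _ _),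
    exp_algebraMap, ← Complex.exp_eq_exp_ℂ, ← mulVec_mulVec,
    exp_mulVec_eq_sum_of_pow_mulVec_eq_zero hzv, Algebra.algebraMap_eq_smul_one, smul_mulVec, one_mulVec]
  congr 1
  refine sum_congr rfl fun m _ => ?_
  rw [smul_pow, smul_mulVec, smul_smul, mul_comm]

theorem tendsto_exp_smul_mulVec_of_pow_sub_mulVec_eq_zero (hμ : μ.re < 0)
    (hv : (C - μ • 1) ^ k *ᵥ v = 0) :
    Tendsto (fun t : ℝ => exp ((t : ℂ) • C) *ᵥ v) atTop (𝓝 0) := by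
  simp_rw [exp_smul_mulVec_eq_of_pow_sub_mulVec_eq_zero hv, smul_sum, smul_smul, ← mul_assoc]
  simpa using tendsto_finsetSum (range k) fun m _ =>
    ((Complex.tendsto_exp_ofReal_mul_mul_pow_atTop_nhds_zero hμ m).mul_const
      (m !⁻¹ : ℂ)).smul_const ((C - μ • 1) ^ m *ᵥ v)

theorem tendsto_exp_smul_mulVec_of_re_neg (hC : ∀ μ ∈ spectrum ℂ C, μ.re < 0) (v : n → ℂ) :
    Tendsto (fun t : ℝ => exp ((t : ℂ) • C) *ᵥ v) atTop (𝓝 0) := by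
  have hv : v ∈ ⨆ μ, Module.End.maxGenEigenspace (toLinAlgEquiv' C) μ := by
    rw [Module.End.iSup_maxGenEigenspace_eq_top]; trivial
  refine Submodule.iSup_induction _
    (motive := fun w => Tendsto (fun t : ℝ => exp ((t : ℂ) • C) *ᵥ w) atTop (𝓝 0)) hv
    (fun μ w hw => ?_) (by simp)
    fun w₁ w₂ h₁ h₂ => by simpa only [mulVec_add, add_zero] using h₁.add h₂
  by_cases hw0 : w = 0
  · simp [hw0]
  obtain ⟨k, hk⟩ := (Module.End.mem_maxGenEigenspace _ _ _).1 hw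
  refine tendsto_exp_smul_mulVec_of_pow_sub_mulVec_eq_zero
    (hC μ (mem_spectrum_of_mem_maxGenEigenspace hw hw0)) (k := k) ?_
  rwa [← map_one toLinAlgEquiv', ← map_smul, ← map_sub, ← map_pow, toLinAlgEquiv'_apply]
    at hk

theorem tendsto_exp_smul_atTop_nhds_zero_of_re_neg (hC : ∀ μ ∈ spectrum ℂ C, μ.re < 0) :
    Tendsto (fun t : ℝ => exp ((t : ℂ) • C)) atTop (𝓝 0) := by
  refine tendsto_pi_nhds.2 fun i => tendsto_pi_nhds.2 fun j => ?_
  simpa using (tendsto_pi_nhds.1 (tendsto_exp_smul_mulVec_of_re_neg hC (Pi.single j 1))) i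

end Matrix

/-- If `A` is positively stable then `exp(-tA) → 0` as `t → ∞`. -/
theorem pos_stable_exp_tendsto_zero {d : ℕ} (A : Matrix (Fin d) (Fin d) ℝ)
    (hA : ∀ μ ∈ spectrum ℂ (A.map Complex.ofReal), 0 < μ.re) :
    Filter.Tendsto (fun t : ℝ => exp (-(t • A))) Filter.atTop (nhds 0) := by
  have hstable : ∀ μ ∈ spectrum ℂ (-A.map Complex.ofReal), μ.re < 0 := fun μ hμ => by
    rw [← spectrum.neg_eq, Set.mem_neg] at hμ
    simpa using hA _ hμ
  have hcomplex (t : ℝ) :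
      (exp (-(t • A))).map Complex.ofReal = exp ((t : ℂ) • -A.map Complex.ofReal) := by
    rw [Matrix.map_ofReal_exp]
    congr 1
    ext i j
    simp
  have hre : Tendsto (fun t : ℝ => (exp ((t : ℂ) • -A.map Complex.ofReal)).map Complex.re)
      atTop (𝓝 0) := by
    simpa only [id, Function.comp_def, Matrix.map_zero _ Complex.zero_re] using
      ((continuous_id.matrix_map Complex.continuous_re).tendsto 0).comp
        (Matrix.tendsto_exp_smul_atTop_nhds_zero_of_re_neg hstable)
  refine hre.congr fun t => ?_
  rw [← hcomplex, Matrix.map_map]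
  ext i j
  simp
end

section
/- Let A and B be d×d real matrices such that A + B is positively stable, and suppose ξ(t) = exp(-tA) - exp(-t(A+B)) converges as t → ∞. Then A is almost-positively stable, i.e., exp(-tA) converges as t → ∞, and the limit of ξ(t) is the projection onto ker A along the generalized eigenspaces of the nonzero eigenvalues of A. -/
/-!
Since `A + B` is positively stable, `exp (-t(A+B)) → 0`: on the generalized eigenspace of an
eigenvalue `μ` the flow is `e^{-tμ}` times a polynomial in `t`. Hence `exp (-tA)` converges, to
some `L`. By the semigroup law `L` absorbs `exp (-sA)` on both sides, so `L² = L`, and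
differentiating at `s = 0` gives `AL = LA = 0`; moreover `L` fixes `ker A`. An eigenvector `v` of
`A` for `μ ≠ 0` then satisfies `e^{-tμ} v → Lv = μ⁻¹ LAv = 0`, which forces `Re μ > 0`, and
`A²x = 0` gives `Ax = L(Ax) = (LA)x = 0`.
-/

open Matrix NormedSpace

attribute [local instance] Matrix.linftyOpNormedRing Matrix.linftyOpNormedAlgebra

open Filter Topology

section ExpSemigroup

variable {𝔸 : Type*} [NormedRing 𝔸] [NormedAlgebra ℝ 𝔸] [CompleteSpace 𝔸] {a L : 𝔸}

theorem exp_neg_add_smul (a : 𝔸) (s t : ℝ) :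
    exp (-((s + t) • a)) = exp (-(s • a)) * exp (-(t • a)) := by
  rw [add_smul, neg_add, exp_add_of_commute_of_mem_ball (𝕂 := ℝ)
    (((Commute.refl a).smul_left s).smul_right t).neg_left.neg_right] <;>
    simp [expSeries_radius_eq_top]

theorem mul_exp_neg_smul_eq_of_tendsto (h : Tendsto (fun t : ℝ => exp (-(t • a))) atTop (𝓝 L))
    (s : ℝ) : L * exp (-(s • a)) = L :=
  tendsto_nhds_unique (h.mul_const _) <| by
    simpa only [Function.comp_def, id_eq, exp_neg_add_smul] using
      h.comp (tendsto_atTop_add_const_right atTop s tendsto_id)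

theorem exp_neg_smul_mul_eq_of_tendsto (h : Tendsto (fun t : ℝ => exp (-(t • a))) atTop (𝓝 L))
    (s : ℝ) : exp (-(s • a)) * L = L :=
  tendsto_nhds_unique (h.const_mul _) <| by
    simpa only [Function.comp_def, id_eq, exp_neg_add_smul] using
      h.comp (tendsto_atTop_add_const_left atTop s tendsto_id)

theorem isIdempotentElem_of_tendsto_exp_neg_smul
    (h : Tendsto (fun t : ℝ => exp (-(t • a))) atTop (𝓝 L)) : IsIdempotentElem L :=
  tendsto_nhds_unique (h.const_mul L) <| by
    simpa only [mul_exp_neg_smul_eq_of_tendsto h] using tendsto_const_nhds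

/-- `s ↦ exp (s • -a) * L` is constant, so its derivative `-a * L` at `0` vanishes. -/
theorem mul_eq_zero_of_tendsto_exp_neg_smul
    (h : Tendsto (fun t : ℝ => exp (-(t • a))) atTop (𝓝 L)) : a * L = 0 := by
  have hderiv := (hasDerivAt_exp_smul_const' (-a) (0 : ℝ)).mul_const L
  simp only [smul_neg, exp_neg_smul_mul_eq_of_tendsto h] at hderiv
  simpa using hderiv.unique (hasDerivAt_const 0 L)

theorem mul_eq_zero_of_tendsto_exp_neg_smul'
    (h : Tendsto (fun t : ℝ => exp (-(t • a))) atTop (𝓝 L)) : L * a = 0 := by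
  have hderiv := (hasDerivAt_exp_smul_const (-a) (0 : ℝ)).const_mul L
  simp only [smul_neg, mul_exp_neg_smul_eq_of_tendsto h] at hderiv
  simpa using hderiv.unique (hasDerivAt_const 0 L)

end ExpSemigroup

theorem tendsto_pow_smul_exp_neg_smul {μ : ℂ} (hμ : 0 < μ.re) (i : ℕ) :
    Tendsto (fun t : ℝ => t ^ i • exp (-(t • μ))) atTop (𝓝 0) := by
  rw [tendsto_zero_iff_norm_tendsto_zero]
  refine (tendsto_rpow_mul_exp_neg_mul_atTop_nhds_zero i μ.re hμ).congr' ?_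
  filter_upwards [eventually_ge_atTop 0] with t ht
  simp [← Complex.exp_eq_exp_ℂ, Complex.norm_exp, abs_of_nonneg ht, mul_comm]

theorem re_pos_of_tendsto_exp_neg_smul_smul_zero {E : Type*} [NormedAddCommGroup E]
    [NormedSpace ℂ E] {μ : ℂ} {v : E} (hv : v ≠ 0)
    (h : Tendsto (fun t : ℝ => exp (-(t • μ)) • v) atTop (𝓝 0)) : 0 < μ.re := by
  by_contra hre
  have hgrow : ∀ᶠ t : ℝ in atTop, ‖v‖ ≤ ‖exp (-(t • μ)) • v‖ := by
    filter_upwards [eventually_ge_atTop 0] with t ht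
    rw [norm_smul, ← Complex.exp_eq_exp_ℂ, Complex.norm_exp]
    refine le_mul_of_one_le_left (norm_nonneg v) (Real.one_le_exp ?_)
    simp only [Complex.neg_re, Complex.real_smul, Complex.re_ofReal_mul]
    nlinarith
  exact hv (norm_le_zero_iff.1 (by simpa using ge_of_tendsto h.norm hgrow))

namespace Matrix

theorem tendsto_of_forall_tendsto_mulVec {α m n R : Type*} [Fintype n] [DecidableEq n]
    [NonAssocSemiring R] [TopologicalSpace R] {l : Filter α} {X : α → Matrix m n R}
    {Y : Matrix m n R} (h : ∀ v, Tendsto (fun t => X t *ᵥ v) l (𝓝 (Y *ᵥ v))) :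
    Tendsto X l (𝓝 Y) :=
  tendsto_pi_nhds.2 fun i => tendsto_pi_nhds.2 fun j => by
    simpa only [Function.comp_def, mulVec_single_one, col_apply] using
      (continuous_apply i).tendsto _ |>.comp (h (Pi.single j 1))

theorem _root_.Filter.Tendsto.matrix_mulVec_const {α m n R : Type*} [Fintype n]
    [NonUnitalNonAssocSemiring R] [TopologicalSpace R] [IsTopologicalSemiring R] {l : Filter α}
    {X : α → Matrix m n R} {Y : Matrix m n R} (h : Tendsto X l (𝓝 Y)) (v : n → R) :
    Tendsto (fun t => X t *ᵥ v) l (𝓝 (Y *ᵥ v)) :=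
  ((continuous_id.matrix_mulVec continuous_const).tendsto Y).comp h

section RCLike

variable {n 𝕂 : Type*} [Fintype n] [DecidableEq n] [RCLike 𝕂]

theorem exp_mulVec_of_pow_mulVec_eq_zero {N : Matrix n n 𝕂} {v : n → 𝕂} {k : ℕ}
    (h : N ^ k *ᵥ v = 0) :
    exp N *ᵥ v = ∑ i ∈ Finset.range k, (i.factorial : 𝕂)⁻¹ • (N ^ i *ᵥ v) := by
  have hvanish : ∀ i ∉ Finset.range k, (i.factorial : 𝕂)⁻¹ • (N ^ i *ᵥ v) = 0 := fun i hi => by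
    rw [← Nat.sub_add_cancel (not_lt.1 (Finset.mem_range.not.1 hi)), pow_add, ← mulVec_mulVec, h,
      mulVec_zero, smul_zero]
  have hsum : HasSum (fun i => (i.factorial : 𝕂)⁻¹ • (N ^ i *ᵥ v)) (exp N *ᵥ v) := by
    simp only [← smul_mulVec, exp_eq_tsum 𝕂]
    exact (expSeries_summable' N).hasSum.map (mulVec.addMonoidHomLeft v)
      (continuous_id.matrix_mulVec continuous_const)
  exact hsum.unique (hasSum_sum_of_ne_finset_zero hvanish)

theorem exp_eq_exp_smul_exp_sub_smul_one (M : Matrix n n 𝕂) (μ : 𝕂) :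
    exp M = exp μ • exp (M - μ • 1) :=
  calc exp M = exp (algebraMap 𝕂 _ μ + (M - μ • 1)) := by
        rw [Algebra.algebraMap_eq_smul_one, add_sub_cancel]
    _ = exp (algebraMap 𝕂 _ μ) * exp (M - μ • 1) :=
        exp_add_of_commute _ _ (Algebra.commute_algebraMap_left μ _)
    _ = exp μ • exp (M - μ • 1) := by
        rw [Algebra.smul_def (exp μ)]
        exact congrArg (· * _) (map_exp _ (continuous_algebraMap 𝕂 (Matrix n n 𝕂)) μ).symm

theorem exp_mulVec_of_pow_sub_smul_mulVec_eq_zero {M : Matrix n n 𝕂} {μ : 𝕂} {v : n → 𝕂}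
    {k : ℕ} (h : (M - μ • 1) ^ k *ᵥ v = 0) :
    exp M *ᵥ v = exp μ • ∑ i ∈ Finset.range k, (i.factorial : 𝕂)⁻¹ • ((M - μ • 1) ^ i *ᵥ v) := by
  rw [exp_eq_exp_smul_exp_sub_smul_one M μ, smul_mulVec, exp_mulVec_of_pow_mulVec_eq_zero h]

theorem exp_mulVec_of_mulVec_eq_smul {M : Matrix n n 𝕂} {μ : 𝕂} {v : n → 𝕂}
    (h : M *ᵥ v = μ • v) : exp M *ᵥ v = exp μ • v := by
  have hker : (M - μ • 1) ^ 1 *ᵥ v = 0 := by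
    rw [pow_one, sub_mulVec, h, smul_mulVec, one_mulVec, sub_self]
  simp [exp_mulVec_of_pow_sub_smul_mulVec_eq_zero hker]

theorem mulVec_eq_self_of_tendsto_exp_neg_smul {A L : Matrix n n 𝕂}
    (h : Tendsto (fun t : ℝ => exp (-(t • A))) atTop (𝓝 L)) {x : n → 𝕂} (hx : A *ᵥ x = 0) :
    L *ᵥ x = x := by
  have hfix (t : ℝ) : exp (-(t • A)) *ᵥ x = x := by
    rw [exp_mulVec_of_mulVec_eq_smul (μ := 0) (by rw [neg_mulVec, smul_mulVec, hx]; simp),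
      exp_zero, one_smul]
  exact tendsto_nhds_unique (h.matrix_mulVec_const x) <| by
    simpa only [hfix] using tendsto_const_nhds

theorem mulVec_eq_zero_of_mulVec_mulVec_eq_zero {A L : Matrix n n 𝕂}
    (h : Tendsto (fun t : ℝ => exp (-(t • A))) atTop (𝓝 L)) {x : n → 𝕂}
    (hx : A *ᵥ (A *ᵥ x) = 0) : A *ᵥ x = 0 :=
  calc A *ᵥ x = L *ᵥ (A *ᵥ x) := (mulVec_eq_self_of_tendsto_exp_neg_smul h hx).symm
    _ = 0 := by rw [mulVec_mulVec, mul_eq_zero_of_tendsto_exp_neg_smul' h, zero_mulVec]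

end RCLike

variable {n : Type*} [Fintype n] [DecidableEq n]

theorem tendsto_exp_neg_smul_mulVec_of_mem_maxGenEigenspace {M : Matrix n n ℂ} {μ : ℂ}
    (hμ : 0 < μ.re) {v : n → ℂ} (hv : v ∈ Module.End.maxGenEigenspace (toLin' M) μ) :
    Tendsto (fun t : ℝ => exp (-(t • M)) *ᵥ v) atTop (𝓝 0) := by
  obtain ⟨k, hk⟩ := (Module.End.mem_maxGenEigenspace _ _ _).1 hv
  have hNk : (μ • 1 - M) ^ k *ᵥ v = 0 := by
    have : (M - μ • 1) ^ k *ᵥ v = 0 := by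
      rw [← toLinAlgEquiv'_apply, map_pow, map_sub, map_smul, map_one]
      exact hk
    rw [← neg_sub, neg_pow, ← mulVec_mulVec, this, mulVec_zero]
  have hshift (t : ℝ) : -(t • M) - (-(t • μ)) • 1 = t • (μ • 1 - M) := by
    rw [smul_sub, neg_smul, smul_assoc]; abel
  have hexp (t : ℝ) : exp (-(t • M)) *ᵥ v = ∑ i ∈ Finset.range k,
      (i.factorial : ℂ)⁻¹ • ((t ^ i • exp (-(t • μ))) • ((μ • 1 - M) ^ i *ᵥ v)) := by
    rw [exp_mulVec_of_pow_sub_smul_mulVec_eq_zero (k := k)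
      (by rw [hshift, smul_pow, smul_mulVec, hNk, smul_zero]), hshift, Finset.smul_sum]
    refine Finset.sum_congr rfl fun i _ => ?_
    rw [smul_pow, smul_mulVec, smul_assoc, smul_comm (exp _) ((i.factorial : ℂ)⁻¹),
      smul_comm (exp _) (t ^ i)]
  have hterms := tendsto_finsetSum (Finset.range k) fun i _ =>
    ((tendsto_pow_smul_exp_neg_smul hμ i).smul_const ((μ • 1 - M) ^ i *ᵥ v)).const_smul
      (i.factorial : ℂ)⁻¹
  simp only [zero_smul, smul_zero, Finset.sum_const_zero] at hterms
  simp only [hexp]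
  exact hterms

theorem tendsto_exp_neg_smul_zero {M : Matrix n n ℂ} (hM : ∀ μ ∈ spectrum ℂ M, 0 < μ.re) :
    Tendsto (fun t : ℝ => exp (-(t • M))) atTop (𝓝 0) := by
  refine tendsto_of_forall_tendsto_mulVec fun v => ?_
  have hv : v ∈ ⨆ μ, Module.End.maxGenEigenspace (toLin' M) μ := by
    rw [Module.End.iSup_maxGenEigenspace_eq_top]; trivial
  rw [zero_mulVec]
  induction hv using Submodule.iSup_induction' with
  | mem μ w hw =>
    rcases eq_or_ne w 0 with rfl | hw0
    · simp
    have hμ : μ ∈ spectrum ℂ M := by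
      rw [← spectrum_toLin']
      exact Module.End.HasUnifEigenvalue.mem_spectrum <|
        Module.End.HasUnifEigenvalue.lt zero_lt_one ((Submodule.ne_bot_iff _).2 ⟨w, hw, hw0⟩)
    exact tendsto_exp_neg_smul_mulVec_of_mem_maxGenEigenspace (hM μ hμ) hw
  | zero => simp
  | add w₁ w₂ _ _ h₁ h₂ => simpa [mulVec_add] using h₁.add h₂

theorem exp_neg_smul_map_ofReal (X : Matrix n n ℝ) (t : ℝ) :
    exp (-(t • X.map Complex.ofReal)) = (exp (-(t • X))).map Complex.ofReal := by
  have hmap : -(t • X.map Complex.ofReal) = (-(t • X)).map Complex.ofReal := by ext; simp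
  rw [hmap]
  exact (map_exp (Complex.ofRealHom.mapMatrix : Matrix n n ℝ →+* _)
    (continuous_id.matrix_map Complex.continuous_ofReal) _).symm

theorem tendsto_exp_neg_smul_map_ofReal {A L : Matrix n n ℝ}
    (h : Tendsto (fun t : ℝ => exp (-(t • A))) atTop (𝓝 L)) :
    Tendsto (fun t : ℝ => exp (-(t • A.map Complex.ofReal))) atTop (𝓝 (L.map Complex.ofReal)) := by
  simp only [exp_neg_smul_map_ofReal]
  exact ((continuous_id.matrix_map Complex.continuous_ofReal).tendsto L).comp h

theorem tendsto_exp_neg_smul_zero_of_map_ofReal {C : Matrix n n ℝ}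
    (hC : ∀ μ ∈ spectrum ℂ (C.map Complex.ofReal), 0 < μ.re) :
    Tendsto (fun t : ℝ => exp (-(t • C))) atTop (𝓝 0) := by
  have h := ((continuous_id.matrix_map Complex.continuous_re).tendsto 0).comp
    (tendsto_exp_neg_smul_zero hC)
  simp only [Function.comp_def, exp_neg_smul_map_ofReal, id_eq, map_map] at h
  simpa using h

theorem eq_zero_or_re_pos_of_tendsto_exp_neg_smul {A L : Matrix n n ℂ}
    (h : Tendsto (fun t : ℝ => exp (-(t • A))) atTop (𝓝 L)) {μ : ℂ} (hμ : μ ∈ spectrum ℂ A) :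
    μ = 0 ∨ 0 < μ.re := by
  refine or_iff_not_imp_left.2 fun hμ0 => ?_
  obtain ⟨v, hv⟩ := (Module.End.hasEigenvalue_iff_mem_spectrum.2
    (spectrum_toLin' A ▸ hμ)).exists_hasEigenvector
  have hAv : A *ᵥ v = μ • v := by simpa using hv.apply_eq_smul
  have hLv : L *ᵥ v = 0 := by
    have : μ • (L *ᵥ v) = 0 := by
      rw [← mulVec_smul, ← hAv, mulVec_mulVec, mul_eq_zero_of_tendsto_exp_neg_smul' h,
        zero_mulVec]
    exact (smul_eq_zero.1 this).resolve_left hμ0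
  have hexp (t : ℝ) : exp (-(t • A)) *ᵥ v = exp (-(t • μ)) • v :=
    exp_mulVec_of_mulVec_eq_smul <| by
      rw [neg_mulVec, smul_mulVec, hAv, neg_smul, smul_assoc, smul_comm]
  have hlim := h.matrix_mulVec_const v
  simp only [hexp, hLv] at hlim
  exact re_pos_of_tendsto_exp_neg_smul_smul_zero hv.2 hlim

end Matrix

/-- If `A + B` is positively stable and `ξ(t) = exp(-tA) - exp(-t(A+B))` converges
as `t → ∞`, then `A` is almost-positively stable (zero eigenvalues have equal algebraic
and geometric multiplicity, i.e. `ker A² = ker A`, all other eigenvalues have positive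
real part), and the limit of `ξ` is the projection onto `ker A` along the generalized
eigenspaces of the nonzero eigenvalues of `A`. -/
theorem xi_converges_iff_almost_pos_stable {d : ℕ} (A B : Matrix (Fin d) (Fin d) ℝ)
    (hAB : ∀ μ ∈ spectrum ℂ ((A + B).map Complex.ofReal), 0 < μ.re)
    (hconv : ∃ L : Matrix (Fin d) (Fin d) ℝ,
      Filter.Tendsto (fun t : ℝ => exp (-(t • A)) - exp (-(t • (A + B))))
        Filter.atTop (nhds L)) :
    (∀ μ ∈ spectrum ℂ (A.map Complex.ofReal), μ = 0 ∨ 0 < μ.re) ∧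
    (∀ x : Fin d → ℝ, A *ᵥ (A *ᵥ x) = 0 → A *ᵥ x = 0) ∧
    ∃ P : Matrix (Fin d) (Fin d) ℝ,
      (P * P = P ∧ A * P = 0 ∧ P * A = 0 ∧
        (∀ x : Fin d → ℝ, A *ᵥ x = 0 → P *ᵥ x = x)) ∧
      Filter.Tendsto (fun t : ℝ => exp (-(t • A)) - exp (-(t • (A + B))))
        Filter.atTop (nhds P) := by
  obtain ⟨L, hL⟩ := hconv
  have hE : Tendsto (fun t : ℝ => exp (-(t • A))) atTop (𝓝 L) := by
    simpa using hL.add (tendsto_exp_neg_smul_zero_of_map_ofReal hAB)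
  exact ⟨fun μ => eq_zero_or_re_pos_of_tendsto_exp_neg_smul (tendsto_exp_neg_smul_map_ofReal hE),
    fun x => mulVec_eq_zero_of_mulVec_mulVec_eq_zero hE,
    L, ⟨isIdempotentElem_of_tendsto_exp_neg_smul hE, mul_eq_zero_of_tendsto_exp_neg_smul hE,
      mul_eq_zero_of_tendsto_exp_neg_smul' hE, fun x => mulVec_eq_self_of_tendsto_exp_neg_smul hE⟩,
    hL⟩
end
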